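/- arXiv:1402.0957 — 5 statements merged into one kernel-verified Lean document; each statement's English description precedes it below -/
import Mathlib

section
/- Let A and A+ΔA be real m×n matrices, both of rank n, with leverage scores ℓ_j and ℓ̃_j respectively, and let θ₁ ≤ ⋯ ≤ θ_n be the principal angles between range(A) and range(A+ΔA). Then for each j, |ℓ̃_j − ℓ_j| ≤ 2√(ℓ_j(1−ℓ_j)) cos θ₁ sin θ_n + (sin θ_n)². -/
open Matrix

/-- Spectral (two-)norm of a real rectangular matrix. -/
noncomputable def spec {m n : ℕ} (A : Matrix (Fin m) (Fin n) ℝ) : ℝ :=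
  ‖LinearMap.toContinuousLinearMap (Matrix.toEuclideanLin A)‖

/-- Frobenius norm. -/
noncomputable def frob {m n : ℕ} (A : Matrix (Fin m) (Fin n) ℝ) : ℝ :=
  Real.sqrt (∑ i, ∑ j, (A i j) ^ 2)

/-- Leverage score: squared Euclidean norm of the j-th row. -/
noncomputable def lev {m n : ℕ} (Q : Matrix (Fin m) (Fin n) ℝ) (j : Fin m) : ℝ :=
  ∑ k, (Q j k) ^ 2

/-- Euclidean norm of the j-th row. -/
noncomputable def rnorm {m n : ℕ} (A : Matrix (Fin m) (Fin n) ℝ) (j : Fin m) : ℝ :=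
  Real.sqrt (∑ k, (A j k) ^ 2)

/-- Moore–Penrose inverse of a full column rank matrix. -/
noncomputable def pinv {m n : ℕ} (A : Matrix (Fin m) (Fin n) ℝ) : Matrix (Fin n) (Fin m) ℝ :=
  (Aᵀ * A)⁻¹ * Aᵀ


/-! Write the `j`-th row of `Qt` as `c + b` with `c = Q j ᵥ* C`, `C = Qᵀ Qt`, its component in
`range Q`, and `b` the `j`-th row of `(1 - Q Qᵀ) Qt`. Since `C Cᵀ = U cos²θ Uᵀ`, `‖c‖²` lies between
`cos²θₙ ℓⱼ` and `cos²θ₁ ℓⱼ`. Since `((1 - Q Qᵀ) Qt)ᵀ ((1 - Q Qᵀ) Qt) = 1 - Cᵀ C = V sin²θ Vᵀ` and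
the `j`-th row of the projector `1 - Q Qᵀ` has squared norm `1 - ℓⱼ`, `‖b‖² ≤ sin²θₙ (1 - ℓⱼ)`.
Cauchy–Schwarz on the cross term `2 c ⬝ᵥ b` finishes. -/

open Real

section DotProduct

variable {ι κ : Type*} [Fintype ι] [Fintype κ]

lemma dotProduct_self_nonneg (x : ι → ℝ) : 0 ≤ x ⬝ᵥ x :=
  Finset.sum_nonneg fun i _ => mul_self_nonneg (x i)

lemma dotProduct_sq_le_dotProduct_self_mul (x y : ι → ℝ) :
    (x ⬝ᵥ y) ^ 2 ≤ (x ⬝ᵥ x) * (y ⬝ᵥ y) := by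
  simpa [dotProduct, sq] using Finset.sum_mul_sq_le_sq_mul_sq Finset.univ x y

lemma vecMul_dotProduct_vecMul_self (A : Matrix ι κ ℝ) (x : ι → ℝ) :
    (x ᵥ* A) ⬝ᵥ (x ᵥ* A) = (x ᵥ* (A * Aᵀ)) ⬝ᵥ x := by
  rw [← vecMul_vecMul, dotProduct_vecMul_transpose]

/-- `‖x ᵥ* M‖² = x ⬝ᵥ M *ᵥ (x ᵥ* M)`, and Cauchy–Schwarz moves the bound on `M` over to `Mᵀ`. -/
lemma vecMul_dotProduct_self_le {M : Matrix ι κ ℝ} {β : ℝ} (hβ : 0 ≤ β)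
    (hM : ∀ y, (M *ᵥ y) ⬝ᵥ (M *ᵥ y) ≤ β * (y ⬝ᵥ y)) (x : ι → ℝ) :
    (x ᵥ* M) ⬝ᵥ (x ᵥ* M) ≤ β * (x ⬝ᵥ x) := by
  set b := x ᵥ* M
  have hb_sq : (b ⬝ᵥ b) * (b ⬝ᵥ b) ≤ (β * (x ⬝ᵥ x)) * (b ⬝ᵥ b) := calc
    (b ⬝ᵥ b) * (b ⬝ᵥ b) = (x ⬝ᵥ M *ᵥ b) ^ 2 := by rw [dotProduct_mulVec, sq]
    _ ≤ (x ⬝ᵥ x) * ((M *ᵥ b) ⬝ᵥ (M *ᵥ b)) := dotProduct_sq_le_dotProduct_self_mul _ _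
    _ ≤ (x ⬝ᵥ x) * (β * (b ⬝ᵥ b)) := by
      gcongr
      · exact dotProduct_self_nonneg x
      · exact hM b
    _ = (β * (x ⬝ᵥ x)) * (b ⬝ᵥ b) := by ring
  rcases (dotProduct_self_nonneg b).eq_or_lt with h | h
  · rw [← h]
    exact mul_nonneg hβ (dotProduct_self_nonneg x)
  · exact le_of_mul_le_mul_right hb_sq h

lemma vecMul_mul_diagonal_mul_transpose_dotProduct [DecidableEq κ] (U : Matrix ι κ ℝ)
    (d : κ → ℝ) (x : ι → ℝ) :
    (x ᵥ* (U * diagonal d * Uᵀ)) ⬝ᵥ x = ∑ k, d k * (x ᵥ* U) k ^ 2 := by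
  rw [← vecMul_vecMul, dotProduct_vecMul_transpose, ← vecMul_vecMul]
  simp only [dotProduct, vecMul_diagonal]
  exact Finset.sum_congr rfl fun k _ => by ring

variable [DecidableEq ι]

lemma sum_sq_vecMul_of_mul_transpose_eq_one {U : Matrix ι κ ℝ} (hU : U * Uᵀ = 1)
    (x : ι → ℝ) : ∑ k, (x ᵥ* U) k ^ 2 = x ⬝ᵥ x := by
  simp only [sq]
  rw [← dotProduct, vecMul_dotProduct_vecMul_self, hU, vecMul_one]

lemma vecMul_mul_diagonal_mul_transpose_dotProduct_le [DecidableEq κ] {U : Matrix ι κ ℝ}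
    (hU : U * Uᵀ = 1) {d : κ → ℝ} {β : ℝ} (hd : ∀ k, d k ≤ β) (x : ι → ℝ) :
    (x ᵥ* (U * diagonal d * Uᵀ)) ⬝ᵥ x ≤ β * (x ⬝ᵥ x) := by
  rw [vecMul_mul_diagonal_mul_transpose_dotProduct, ← sum_sq_vecMul_of_mul_transpose_eq_one hU,
    Finset.mul_sum]
  gcongr with k
  exact hd k

lemma le_vecMul_mul_diagonal_mul_transpose_dotProduct [DecidableEq κ] {U : Matrix ι κ ℝ}
    (hU : U * Uᵀ = 1) {d : κ → ℝ} {α : ℝ} (hd : ∀ k, α ≤ d k) (x : ι → ℝ) :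
    α * (x ⬝ᵥ x) ≤ (x ᵥ* (U * diagonal d * Uᵀ)) ⬝ᵥ x := by
  rw [vecMul_mul_diagonal_mul_transpose_dotProduct, ← sum_sq_vecMul_of_mul_transpose_eq_one hU,
    Finset.mul_sum]
  gcongr with k
  exact hd k

end DotProduct

section SVD

variable {ι ι' κ : Type*} [Fintype κ] [DecidableEq κ]

lemma transpose_mul_diagonal_mul_transpose (U : Matrix ι κ ℝ) (V : Matrix ι' κ ℝ) (σ : κ → ℝ) :
    (U * diagonal σ * Vᵀ)ᵀ = V * diagonal σ * Uᵀ := by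
  rw [transpose_mul, transpose_mul, diagonal_transpose, transpose_transpose, Matrix.mul_assoc]

lemma svd_mul_transpose_self [Fintype ι'] {V : Matrix ι' κ ℝ} (hV : Vᵀ * V = 1)
    (U : Matrix ι κ ℝ) (σ : κ → ℝ) :
    (U * diagonal σ * Vᵀ) * (U * diagonal σ * Vᵀ)ᵀ = U * diagonal (fun k => σ k ^ 2) * Uᵀ := by
  rw [transpose_mul_diagonal_mul_transpose]
  simp only [Matrix.mul_assoc]
  rw [← Matrix.mul_assoc Vᵀ, hV, Matrix.one_mul, ← Matrix.mul_assoc (diagonal σ),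
    diagonal_mul_diagonal]
  simp only [sq]

lemma svd_transpose_mul_self [Fintype ι] {U : Matrix ι κ ℝ} (hU : Uᵀ * U = 1)
    (V : Matrix ι' κ ℝ) (σ : κ → ℝ) :
    (U * diagonal σ * Vᵀ)ᵀ * (U * diagonal σ * Vᵀ) = V * diagonal (fun k => σ k ^ 2) * Vᵀ := by
  simpa only [transpose_mul_diagonal_mul_transpose, transpose_transpose] using
    svd_mul_transpose_self hU V σ

end SVD

section Projection

variable {ι κ : Type*} [Fintype ι]

lemma isIdempotentElem_mul_transpose [Fintype κ] [DecidableEq κ] {Q : Matrix ι κ ℝ}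
    (hQ : Qᵀ * Q = 1) : IsIdempotentElem (Q * Qᵀ) := by
  rw [IsIdempotentElem, Matrix.mul_assoc, ← Matrix.mul_assoc Qᵀ, hQ, Matrix.one_mul]

variable {P : Matrix ι ι ℝ} (hP : IsIdempotentElem P) (hPt : Pᵀ = P)
include hP hPt

lemma row_dotProduct_self_of_isIdempotentElem (j : ι) : P j ⬝ᵥ P j = P j j := by
  calc P j ⬝ᵥ P j = (P * Pᵀ) j j := rfl
    _ = P j j := by rw [hPt, hP.eq]

lemma transpose_mul_self_of_isIdempotentElem (W : Matrix ι κ ℝ) :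
    (P * W)ᵀ * (P * W) = Wᵀ * P * W := by
  rw [transpose_mul, hPt, Matrix.mul_assoc, ← Matrix.mul_assoc P, hP.eq, Matrix.mul_assoc]

lemma row_mul_dotProduct_self_le [Fintype κ] {W : Matrix ι κ ℝ} {β : ℝ} (hβ : 0 ≤ β)
    (hW : ∀ y, ((P * W) *ᵥ y) ⬝ᵥ ((P * W) *ᵥ y) ≤ β * (y ⬝ᵥ y)) (j : ι) :
    (P * W) j ⬝ᵥ (P * W) j ≤ β * P j j := by
  have hrow : (P * W) j = P j ᵥ* (P * W) := by
    rw [← mul_apply_eq_vecMul, ← Matrix.mul_assoc, hP.eq]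
  rw [hrow, ← row_dotProduct_self_of_isIdempotentElem hP hPt]
  exact vecMul_dotProduct_self_le hβ hW _

end Projection

section RowPerturbation

variable {ι : Type*} [Fintype ι]

lemma abs_dotProduct_self_add_sub_le {c b : ι → ℝ} {L γ δ : ℝ} (hL0 : 0 ≤ L) (hL1 : L ≤ 1)
    (hγ0 : 0 ≤ γ) (hγ1 : γ ≤ 1) (hδ : 0 ≤ δ) (hc : c ⬝ᵥ c ≤ γ ^ 2 * L)
    (hc' : (1 - δ ^ 2) * L ≤ c ⬝ᵥ c) (hb : b ⬝ᵥ b ≤ δ ^ 2 * (1 - L)) :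
    |(c + b) ⬝ᵥ (c + b) - L| ≤ 2 * √(L * (1 - L)) * γ * δ + δ ^ 2 := by
  have hcross : |c ⬝ᵥ b| ≤ √(L * (1 - L)) * γ * δ := by
    have hsq : (√(L * (1 - L)) * γ * δ) ^ 2 = (γ ^ 2 * L) * (δ ^ 2 * (1 - L)) := by
      rw [mul_pow, mul_pow, sq_sqrt (mul_nonneg hL0 (sub_nonneg.mpr hL1))]
      ring
    refine abs_le_of_sq_le_sq ?_ (by positivity)
    rw [hsq]
    exact (dotProduct_sq_le_dotProduct_self_mul c b).trans
      (mul_le_mul hc hb (dotProduct_self_nonneg b) (by positivity))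
  have hexpand : (c + b) ⬝ᵥ (c + b) = c ⬝ᵥ c + 2 * (c ⬝ᵥ b) + b ⬝ᵥ b := by
    rw [add_dotProduct, dotProduct_add, dotProduct_add, dotProduct_comm b c]
    ring
  have hγL : γ ^ 2 * L ≤ L := mul_le_of_le_one_left hL0 (pow_le_one₀ hγ0 hγ1)
  have hδL : δ ^ 2 * L ≤ δ ^ 2 := mul_le_of_le_one_right (sq_nonneg δ) hL1
  have hδL' : δ ^ 2 * (1 - L) ≤ δ ^ 2 := mul_le_of_le_one_right (sq_nonneg δ) (by linarith)
  rw [hexpand, abs_le]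
  constructor <;> linarith [abs_le.mp hcross, dotProduct_self_nonneg b]

variable [DecidableEq ι] {κ : Type*} [Fintype κ] [DecidableEq κ]

lemma abs_row_dotProduct_self_sub_le_of_svd {Q Qt : Matrix ι κ ℝ} (hQ : Qᵀ * Q = 1)
    (hQt : Qtᵀ * Qt = 1) {U V : Matrix κ κ ℝ} (hU1 : Uᵀ * U = 1) (hU2 : U * Uᵀ = 1)
    (hV1 : Vᵀ * V = 1) (hV2 : V * Vᵀ = 1) {σ : κ → ℝ}
    (hsvd : Qᵀ * Qt = U * diagonal σ * Vᵀ) {γ δ : ℝ} (hγ0 : 0 ≤ γ) (hγ1 : γ ≤ 1) (hδ : 0 ≤ δ)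
    (hσγ : ∀ k, σ k ^ 2 ≤ γ ^ 2) (hσδ : ∀ k, 1 - δ ^ 2 ≤ σ k ^ 2) (j : ι) :
    |Qt j ⬝ᵥ Qt j - Q j ⬝ᵥ Q j| ≤
      2 * √(Q j ⬝ᵥ Q j * (1 - Q j ⬝ᵥ Q j)) * γ * δ + δ ^ 2 := by
  set C := Qᵀ * Qt
  set P : Matrix ι ι ℝ := 1 - Q * Qᵀ
  have hP : IsIdempotentElem P := (isIdempotentElem_mul_transpose hQ).one_sub
  have hPt : Pᵀ = P := by
    rw [transpose_sub, transpose_one, transpose_mul, transpose_transpose]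
  have hPjj : P j j = 1 - Q j ⬝ᵥ Q j := by
    simp [P, Matrix.sub_apply, Matrix.mul_apply, dotProduct]
  have hrow : Qt j = Q j ᵥ* C + (P * Qt) j := by
    have hsplit : Qt = Q * C + P * Qt := by
      rw [← Matrix.mul_assoc, ← Matrix.add_mul, add_sub_cancel, Matrix.one_mul]
    exact congrFun hsplit j
  have hCCt : C * Cᵀ = U * diagonal (fun k => σ k ^ 2) * Uᵀ := by
    rw [hsvd]
    exact svd_mul_transpose_self hV1 U σ
  have hPQt : (P * Qt)ᵀ * (P * Qt) = V * diagonal (fun k => 1 - σ k ^ 2) * Vᵀ := by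
    have hCtC : Cᵀ * C = V * diagonal (fun k => σ k ^ 2) * Vᵀ := by
      rw [hsvd]
      exact svd_transpose_mul_self hU1 V σ
    have hdiag : diagonal (fun k => 1 - σ k ^ 2) = 1 - diagonal (fun k => σ k ^ 2) := by
      rw [← diagonal_one, diagonal_sub]
    calc (P * Qt)ᵀ * (P * Qt) = Qtᵀ * P * Qt := transpose_mul_self_of_isIdempotentElem hP hPt Qt
      _ = 1 - Cᵀ * C := by
        simp only [P, C, Matrix.mul_sub, Matrix.sub_mul, Matrix.mul_one, hQt, transpose_mul,
          transpose_transpose, Matrix.mul_assoc]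
      _ = V * diagonal (fun k => 1 - σ k ^ 2) * Vᵀ := by
        rw [hdiag, Matrix.mul_sub, Matrix.sub_mul, Matrix.mul_one, hV2, hCtC]
  have hb : (P * Qt) j ⬝ᵥ (P * Qt) j ≤ δ ^ 2 * (1 - Q j ⬝ᵥ Q j) := by
    rw [← hPjj]
    refine row_mul_dotProduct_self_le hP hPt (sq_nonneg δ) (fun y => ?_) j
    rw [← vecMul_transpose, vecMul_dotProduct_vecMul_self, transpose_transpose, hPQt]
    exact vecMul_mul_diagonal_mul_transpose_dotProduct_le hV2 (fun k => by linarith [hσδ k]) y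
  have hL1 : Q j ⬝ᵥ Q j ≤ 1 := by
    have := dotProduct_self_nonneg (P j)
    rw [row_dotProduct_self_of_isIdempotentElem hP hPt, hPjj] at this
    linarith
  rw [hrow]
  refine abs_dotProduct_self_add_sub_le (dotProduct_self_nonneg _) hL1 hγ0 hγ1 hδ ?_ ?_ hb
  · rw [vecMul_dotProduct_vecMul_self, hCCt]
    exact vecMul_mul_diagonal_mul_transpose_dotProduct_le hU2 hσγ _
  · rw [vecMul_dotProduct_vecMul_self, hCCt]
    exact le_vecMul_mul_diagonal_mul_transpose_dotProduct hU2 hσδ _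

end RowPerturbation

lemma lev_eq_dotProduct {m n : ℕ} (Q : Matrix (Fin m) (Fin n) ℝ) (j : Fin m) :
    lev Q j = Q j ⬝ᵥ Q j := by
  simp only [lev, dotProduct, sq]

lemma cos_sq_le_cos_sq {x y : ℝ} (hx : 0 ≤ x) (hxy : x ≤ y) (hy : y ≤ π / 2) :
    cos y ^ 2 ≤ cos x ^ 2 :=
  pow_le_pow_left₀ (cos_nonneg_of_mem_Icc ⟨by linarith [pi_pos], hy⟩)
    (cos_le_cos_of_nonneg_of_le_pi hx (by linarith [pi_pos]) hxy) 2

theorem stmt5 {m n : ℕ} (hn : 0 < n)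
    (Q Qt : Matrix (Fin m) (Fin n) ℝ)
    (hQ : Qᵀ * Q = 1) (hQt : Qtᵀ * Qt = 1)
    (U V : Matrix (Fin n) (Fin n) ℝ) (θ : Fin n → ℝ)
    (hU1 : Uᵀ * U = 1) (hU2 : U * Uᵀ = 1) (hV1 : Vᵀ * V = 1) (hV2 : V * Vᵀ = 1)
    (hθ0 : ∀ i, 0 ≤ θ i) (hθ1 : ∀ i, θ i ≤ Real.pi / 2) (hmono : Monotone θ)
    (hsvd : Qᵀ * Qt = U * (Matrix.diagonal fun i => Real.cos (θ i)) * Vᵀ) :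
    ∀ j, |lev Qt j - lev Q j| ≤
      2 * Real.sqrt (lev Q j * (1 - lev Q j)) * Real.cos (θ ⟨0, hn⟩)
        * Real.sin (θ ⟨n - 1, by omega⟩)
      + Real.sin (θ ⟨n - 1, by omega⟩) ^ 2 := by
  intro j
  set first : Fin n := ⟨0, hn⟩
  set last : Fin n := ⟨n - 1, by omega⟩
  have hcos_le : ∀ i, cos (θ i) ^ 2 ≤ cos (θ first) ^ 2 := fun i =>
    cos_sq_le_cos_sq (hθ0 first) (hmono (Nat.zero_le i)) (hθ1 i)
  have hsin_le : ∀ i, 1 - sin (θ last) ^ 2 ≤ cos (θ i) ^ 2 := fun i => by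
    rw [← cos_sq']
    exact cos_sq_le_cos_sq (hθ0 i) (hmono (Nat.le_sub_one_of_lt i.isLt)) (hθ1 last)
  simpa only [lev_eq_dotProduct] using abs_row_dotProduct_self_sub_le_of_svd hQ hQt hU1 hU2 hV1
    hV2 hsvd (cos_nonneg_of_mem_Icc ⟨by linarith [hθ0 first, pi_pos], hθ1 first⟩) (cos_le_one _)
    (sin_nonneg_of_nonneg_of_le_pi (hθ0 last) (by linarith [hθ1 last, pi_pos])) hcos_le hsin_le j
end

section
/- Let A and A+ΔA be real m×n matrices of rank n with leverage scores ℓ_j > 0 and ℓ̃_j, and principal angles θ₁ ≤ ⋯ ≤ θ_n between their column spaces. Then |ℓ̃_j − ℓ_j|/ℓ_j ≤ 2√((1−ℓ_j)/ℓ_j) cos θ₁ sin θ_n + (sin θ_n)²/ℓ_j. -/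
open Matrix

lemma dps_nonneg {k : ℕ} (v : Fin k → ℝ) : 0 ≤ v ⬝ᵥ v :=
  Finset.sum_nonneg fun _ _ => mul_self_nonneg _

lemma cs {k : ℕ} (u v : Fin k → ℝ) : (u ⬝ᵥ v) ^ 2 ≤ (u ⬝ᵥ u) * (v ⬝ᵥ v) := by
  simpa [dotProduct, sq, Finset.mul_sum, mul_pow] using
    Finset.sum_mul_sq_le_sq_mul_sq Finset.univ u v

lemma swap' {m n : ℕ} (M : Matrix (Fin m) (Fin n) ℝ) (u : Fin m → ℝ) (v : Fin n → ℝ) :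
    (Mᵀ *ᵥ u) ⬝ᵥ v = u ⬝ᵥ (M *ᵥ v) := by
  rw [Matrix.mulVec_transpose, Matrix.dotProduct_mulVec]

lemma iso {m n : ℕ} (M : Matrix (Fin m) (Fin n) ℝ) (h : Mᵀ * M = 1) (v : Fin n → ℝ) :
    (M *ᵥ v) ⬝ᵥ (M *ᵥ v) = v ⬝ᵥ v := by
  rw [← swap', Matrix.mulVec_mulVec, h, Matrix.one_mulVec]

set_option maxHeartbeats 1000000 in
theorem stmt7 {m n : ℕ} (hn : 0 < n)
    (A ΔA : Matrix (Fin m) (Fin n) ℝ)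
    (hA : A.rank = n) (hAD : (A + ΔA).rank = n)
    (Q Qt : Matrix (Fin m) (Fin n) ℝ)
    (hQ : Qᵀ * Q = 1) (hQt : Qtᵀ * Qt = 1)
    (hrQ : LinearMap.range Q.mulVecLin = LinearMap.range A.mulVecLin)
    (hrQt : LinearMap.range Qt.mulVecLin = LinearMap.range (A + ΔA).mulVecLin)
    (U V : Matrix (Fin n) (Fin n) ℝ) (θ : Fin n → ℝ)
    (hU1 : Uᵀ * U = 1) (hU2 : U * Uᵀ = 1) (hV1 : Vᵀ * V = 1) (hV2 : V * Vᵀ = 1)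
    (hθ0 : ∀ i, 0 ≤ θ i) (hθ1 : ∀ i, θ i ≤ Real.pi / 2) (hmono : Monotone θ)
    (hsvd : Qᵀ * Qt = U * (Matrix.diagonal fun i => Real.cos (θ i)) * Vᵀ) :
    ∀ j, 0 < lev Q j →
      |lev Qt j - lev Q j| / lev Q j ≤
        2 * Real.sqrt ((1 - lev Q j) / lev Q j) * Real.cos (θ ⟨0, hn⟩)
          * Real.sin (θ ⟨n - 1, by omega⟩)
        + Real.sin (θ ⟨n - 1, by omega⟩) ^ 2 / lev Q j := by
  intro j hl
  classical
  set i0 : Fin n := ⟨0, hn⟩ with hi0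
  set iN : Fin n := ⟨n - 1, by omega⟩ with hiN
  set c1 : ℝ := Real.cos (θ i0) with hc1
  set sN : ℝ := Real.sin (θ iN) with hsN
  set cN : ℝ := Real.cos (θ iN) with hcN
  have hpi := Real.pi_pos
  have hc1nn : 0 ≤ c1 := Real.cos_nonneg_of_mem_Icc ⟨by linarith [hθ0 i0], hθ1 i0⟩
  have hcNnn : 0 ≤ cN := Real.cos_nonneg_of_mem_Icc ⟨by linarith [hθ0 iN], hθ1 iN⟩
  have hsNnn : 0 ≤ sN := Real.sin_nonneg_of_nonneg_of_le_pi (hθ0 iN) (by linarith [hθ1 iN])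
  have hle0 : ∀ i : Fin n, i0 ≤ i := fun i => Fin.mk_le_of_le_val (Nat.zero_le _)
  have hleN : ∀ i : Fin n, i ≤ iN := fun i => by
    have := i.isLt; exact Fin.le_def.mpr (by simp [hiN]; omega)
  have hcos_le : ∀ i, Real.cos (θ i) ≤ c1 := fun i =>
    Real.cos_le_cos_of_nonneg_of_le_pi (hθ0 i0) (by linarith [hθ1 i]) (hmono (hle0 i))
  have hcos_ge : ∀ i, cN ≤ Real.cos (θ i) := fun i =>
    Real.cos_le_cos_of_nonneg_of_le_pi (hθ0 i) (by linarith [hθ1 iN]) (hmono (hleN i))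
  have hcosnn : ∀ i, 0 ≤ Real.cos (θ i) := fun i => le_trans hcNnn (hcos_ge i)
  have hsinnn : ∀ i, 0 ≤ Real.sin (θ i) := fun i =>
    Real.sin_nonneg_of_nonneg_of_le_pi (hθ0 i) (by linarith [hθ1 i])
  have hsin_le : ∀ i, Real.sin (θ i) ≤ sN := fun i =>
    Real.sin_le_sin_of_le_of_le_pi_div_two (by linarith [hθ0 i]) (hθ1 iN) (hmono (hleN i))
  -- vectors
  set e : Fin m → ℝ := Pi.single j 1 with he
  set a : Fin n → ℝ := fun k => Q j k with ha
  set at' : Fin n → ℝ := fun k => Qt j k with hat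
  have hQe : Qᵀ *ᵥ e = a := by
    funext k
    simp [Matrix.mulVec, dotProduct, he, Pi.single_apply, Matrix.transpose_apply, ha]
  have hQte : Qtᵀ *ᵥ e = at' := by
    funext k
    simp [Matrix.mulVec, dotProduct, he, Pi.single_apply, Matrix.transpose_apply, hat]
  have hLa : lev Q j = a ⬝ᵥ a := by simp [lev, dotProduct, ha, sq]
  have hLat : lev Qt j = at' ⬝ᵥ at' := by simp [lev, dotProduct, hat, sq]
  set x : Fin m → ℝ := Q *ᵥ a with hx
  set y : Fin m → ℝ := e - x with hy
  have hQy : Qᵀ *ᵥ y = 0 := by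
    rw [hy, Matrix.mulVec_sub, hQe, hx, Matrix.mulVec_mulVec, hQ, Matrix.one_mulVec, sub_self]
  set c : Fin n → ℝ := Qtᵀ *ᵥ y with hc
  set b : Fin n → ℝ := Qtᵀ *ᵥ x with hb
  set d : Fin n → ℝ := Uᵀ *ᵥ a with hd
  have hdd : d ⬝ᵥ d = a ⬝ᵥ a := iso Uᵀ (by rwa [transpose_transpose]) a
  have hQtQ : Qtᵀ * Q = V * (Matrix.diagonal fun i => Real.cos (θ i)) * Uᵀ := by
    have h := congrArg Matrix.transpose hsvd
    simpa [Matrix.transpose_mul, Matrix.diagonal_transpose, Matrix.mul_assoc] using h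
  have hbform : b = V *ᵥ ((Matrix.diagonal fun i => Real.cos (θ i)) *ᵥ d) := by
    rw [hb, hx, Matrix.mulVec_mulVec, hQtQ, hd, ← Matrix.mulVec_mulVec, ← Matrix.mulVec_mulVec]
  have hbb : b ⬝ᵥ b = ∑ i, Real.cos (θ i) ^ 2 * d i ^ 2 := by
    rw [hbform, iso V hV1]
    simp only [dotProduct, Matrix.mulVec_diagonal]
    exact Finset.sum_congr rfl fun i _ => by ring
  have hxy : x + y = e := by rw [hy]; abel
  have hey : at' = b + c := by
    rw [← hQte, hb, hc, ← Matrix.mulVec_add, hxy]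
  have hLt : lev Qt j = b ⬝ᵥ b + 2 * (b ⬝ᵥ c) + c ⬝ᵥ c := by
    rw [hLat, hey, add_dotProduct, dotProduct_add, dotProduct_add, dotProduct_comm c b]
    ring
  have hee : e ⬝ᵥ e = 1 := by simp [dotProduct, he, Pi.single_apply]
  have hex : e ⬝ᵥ x = a ⬝ᵥ a := by rw [hx, ← swap', hQe]
  have hxx : x ⬝ᵥ x = a ⬝ᵥ a := iso Q hQ a
  have hyy : y ⬝ᵥ y = 1 - a ⬝ᵥ a := by
    have h1 : y ⬝ᵥ y = e ⬝ᵥ e - e ⬝ᵥ x - (x ⬝ᵥ e - x ⬝ᵥ x) := by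
      rw [hy, sub_dotProduct, dotProduct_sub, dotProduct_sub]
    rw [h1, dotProduct_comm x e, hee, hex, hxx]; ring
  have hL1 : a ⬝ᵥ a ≤ 1 := by nlinarith [dps_nonneg y]
  have hLnn : 0 ≤ a ⬝ᵥ a := dps_nonneg a
  -- bound on c
  set g : Fin n → ℝ := (Qᵀ * Qt) *ᵥ c with hg
  set h : Fin n → ℝ := Vᵀ *ᵥ c with hhdef
  have hhc : h ⬝ᵥ h = c ⬝ᵥ c := iso Vᵀ (by rwa [transpose_transpose]) c
  have hgform : g = U *ᵥ ((Matrix.diagonal fun i => Real.cos (θ i)) *ᵥ h) := by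
    rw [hg, hsvd, hhdef, ← Matrix.mulVec_mulVec, ← Matrix.mulVec_mulVec]
  have hgg : g ⬝ᵥ g = ∑ i, Real.cos (θ i) ^ 2 * h i ^ 2 := by
    rw [hgform, iso U hU1]
    simp only [dotProduct, Matrix.mulVec_diagonal]
    exact Finset.sum_congr rfl fun i _ => by ring
  have hhc' : ∑ i, h i ^ 2 = c ⬝ᵥ c := by
    rw [← hhc]; simp [dotProduct, sq]
  have hgg_ge : cN ^ 2 * (c ⬝ᵥ c) ≤ g ⬝ᵥ g := by
    rw [hgg, ← hhc', Finset.mul_sum]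
    exact Finset.sum_le_sum fun i _ =>
      mul_le_mul_of_nonneg_right (pow_le_pow_left₀ hcNnn (hcos_ge i) 2) (sq_nonneg _)
  set w : Fin m → ℝ := Qt *ᵥ c - Q *ᵥ g with hw
  have hcc_yw : c ⬝ᵥ c = y ⬝ᵥ w := by
    have h1 : c ⬝ᵥ c = y ⬝ᵥ (Qt *ᵥ c) := by
      conv_lhs => rw [hc]
      exact swap' Qt y c
    have h2 : y ⬝ᵥ (Q *ᵥ g) = 0 := by rw [← swap' Q y g, hQy, zero_dotProduct]
    rw [hw, dotProduct_sub, h2, sub_zero, h1]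
  have hQtcQg : (Qt *ᵥ c) ⬝ᵥ (Q *ᵥ g) = g ⬝ᵥ g := by
    have h1 := swap' Q (Qt *ᵥ c) g
    have h2 : Qᵀ *ᵥ (Qt *ᵥ c) = g := by rw [Matrix.mulVec_mulVec, hg]
    rw [← h1, h2]
  have hww : w ⬝ᵥ w = c ⬝ᵥ c - g ⬝ᵥ g := by
    have h1 : w ⬝ᵥ w = (Qt *ᵥ c) ⬝ᵥ (Qt *ᵥ c) - (Qt *ᵥ c) ⬝ᵥ (Q *ᵥ g)
        - ((Q *ᵥ g) ⬝ᵥ (Qt *ᵥ c) - (Q *ᵥ g) ⬝ᵥ (Q *ᵥ g)) := by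
      rw [hw, sub_dotProduct, dotProduct_sub, dotProduct_sub]
    rw [h1, dotProduct_comm (Q *ᵥ g) (Qt *ᵥ c), hQtcQg, iso Qt hQt, iso Q hQ]
    ring
  have hsc2 : sN ^ 2 + cN ^ 2 = 1 := Real.sin_sq_add_cos_sq (θ iN)
  have hww_le : w ⬝ᵥ w ≤ sN ^ 2 * (c ⬝ᵥ c) := by
    have key : sN ^ 2 * (c ⬝ᵥ c) = (c ⬝ᵥ c) - cN ^ 2 * (c ⬝ᵥ c) := by
      linear_combination (c ⬝ᵥ c) * hsc2
    rw [hww, key]; linarith [hgg_ge]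
  have hCbound : c ⬝ᵥ c ≤ sN ^ 2 * (y ⬝ᵥ y) := by
    rcases (dps_nonneg c).eq_or_lt with h0 | h0
    · rw [← h0]; exact mul_nonneg (sq_nonneg _) (dps_nonneg y)
    · have h1 : (c ⬝ᵥ c) ^ 2 ≤ (y ⬝ᵥ y) * (w ⬝ᵥ w) := hcc_yw ▸ cs y w
      nlinarith [mul_le_mul_of_nonneg_left hww_le (dps_nonneg y)]
  -- bound on b
  have hdd' : ∑ i, d i ^ 2 = a ⬝ᵥ a := by rw [← hdd]; simp [dotProduct, sq]
  have hbb_le : b ⬝ᵥ b ≤ c1 ^ 2 * (a ⬝ᵥ a) := by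
    rw [hbb, ← hdd', Finset.mul_sum]
    exact Finset.sum_le_sum fun i _ =>
      mul_le_mul_of_nonneg_right (pow_le_pow_left₀ (hcosnn i) (hcos_le i) 2) (sq_nonneg _)
  -- the S term
  set S : ℝ := ∑ i, Real.sin (θ i) ^ 2 * d i ^ 2 with hS
  have hS0 : 0 ≤ S :=
    Finset.sum_nonneg fun i _ => mul_nonneg (sq_nonneg _) (sq_nonneg _)
  have hS_le : S ≤ sN ^ 2 * (a ⬝ᵥ a) := by
    rw [hS, ← hdd', Finset.mul_sum]
    exact Finset.sum_le_sum fun i _ =>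
      mul_le_mul_of_nonneg_right (pow_le_pow_left₀ (hsinnn i) (hsin_le i) 2) (sq_nonneg _)
  have hSbb : S + b ⬝ᵥ b = a ⬝ᵥ a := by
    rw [hS, hbb, ← Finset.sum_add_distrib, ← hdd']
    exact Finset.sum_congr rfl fun i _ => by
      have := Real.sin_sq_add_cos_sq (θ i); nlinarith [this]
  -- |b⬝c| bound
  have hbc : |b ⬝ᵥ c| ≤ c1 * sN * Real.sqrt ((a ⬝ᵥ a) * (y ⬝ᵥ y)) := by
    rw [← Real.sqrt_sq_eq_abs]
    have h1 : (b ⬝ᵥ c) ^ 2 ≤ (c1 * sN) ^ 2 * ((a ⬝ᵥ a) * (y ⬝ᵥ y)) := by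
      have h2 := cs b c
      have h3 : (b ⬝ᵥ b) * (c ⬝ᵥ c) ≤ (c1 ^ 2 * (a ⬝ᵥ a)) * (sN ^ 2 * (y ⬝ᵥ y)) :=
        mul_le_mul hbb_le hCbound (dps_nonneg c)
          (mul_nonneg (sq_nonneg _) hLnn)
      nlinarith
    calc Real.sqrt ((b ⬝ᵥ c) ^ 2) ≤ Real.sqrt ((c1 * sN) ^ 2 * ((a ⬝ᵥ a) * (y ⬝ᵥ y))) :=
          Real.sqrt_le_sqrt h1
      _ = c1 * sN * Real.sqrt ((a ⬝ᵥ a) * (y ⬝ᵥ y)) := by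
          rw [Real.sqrt_mul (sq_nonneg _), Real.sqrt_sq (mul_nonneg hc1nn hsNnn)]
  -- main absolute bound
  have hsqrt_nn : 0 ≤ Real.sqrt ((a ⬝ᵥ a) * (y ⬝ᵥ y)) := Real.sqrt_nonneg _
  have habs : |lev Qt j - lev Q j| ≤
      2 * (c1 * sN * Real.sqrt ((a ⬝ᵥ a) * (y ⬝ᵥ y))) + sN ^ 2 := by
    have hdiff : lev Qt j - lev Q j = -S + 2 * (b ⬝ᵥ c) + c ⬝ᵥ c := by
      rw [hLt, hLa]; linarith [hSbb]
    rw [abs_le]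
    obtain ⟨hbc1, hbc2⟩ := abs_le.mp hbc
    have hSN1 : sN ^ 2 * (a ⬝ᵥ a) ≤ sN ^ 2 * 1 :=
      mul_le_mul_of_nonneg_left hL1 (sq_nonneg sN)
    have hY1 : y ⬝ᵥ y ≤ 1 := by rw [hyy]; linarith
    have hSN2 : sN ^ 2 * (y ⬝ᵥ y) ≤ sN ^ 2 * 1 :=
      mul_le_mul_of_nonneg_left hY1 (sq_nonneg sN)
    constructor
    · linarith [dps_nonneg c, hS_le]
    · linarith [hCbound, hS0]
  -- finish: divide by lev Q j
  have hLpos : 0 < lev Q j := hl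
  have h1L : 0 ≤ 1 - lev Q j := by rw [hLa]; linarith
  have hay : (a ⬝ᵥ a) * (y ⬝ᵥ y) = lev Q j * (1 - lev Q j) := by rw [hyy, hLa]
  rw [hay] at habs
  have hdivnn : 0 ≤ (1 - lev Q j) / lev Q j := div_nonneg h1L hLpos.le
  have hsq : Real.sqrt ((1 - lev Q j) / lev Q j) * lev Q j = Real.sqrt (lev Q j * (1 - lev Q j)) := by
    rw [show lev Q j * (1 - lev Q j) = (1 - lev Q j) / lev Q j * (lev Q j) ^ 2 by
      field_simp]
    rw [Real.sqrt_mul hdivnn, Real.sqrt_sq hLpos.le]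
  have hdiv : |lev Qt j - lev Q j| / lev Q j ≤
      (2 * (c1 * sN * Real.sqrt (lev Q j * (1 - lev Q j))) + sN ^ 2) / lev Q j :=
    (div_le_div_iff_of_pos_right hLpos).mpr habs
  refine hdiv.trans (le_of_eq ?_)
  rw [← hsq]
  field_simp
end

section
/- Let A and ΔA be real m×n matrices with rank(A) = n and ‖ΔA‖₂‖A†‖₂ ≤ 1/2. Then the largest principal angle θ_n between range(A) and range(A+ΔA) satisfies sin θ_n ≤ 2 κ₂(A) ‖(I − AA†)ΔA‖₂ / ‖A‖₂, where κ₂(A) = ‖A‖₂‖A†‖₂. -/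
open Matrix

/-!
Since `A† A = 1`, the factor `A` of `A + ΔA` is killed by `1 - A A†`, so
`(1 - A A†)(A + ΔA)(A + ΔA)† = (1 - A A†) ΔA (A + ΔA)†` and it suffices to show
`‖(A + ΔA)†‖ ≤ 2 ‖A†‖`. With `E = A† ΔA`, `‖E‖ ≤ 1/2`, the matrix `A† (A + ΔA) = 1 + E` is
invertible, so `A + ΔA` keeps full column rank, and
`(A + ΔA)† = A† ((A + ΔA)(A + ΔA)†) - E (A + ΔA)†`, where the middle factor is an orthogonal
projection, of norm at most `1`. Absorbing the last term gives the bound.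
-/

open scoped Matrix.Norms.L2Operator

lemma spec_eq_norm {m n : ℕ} (A : Matrix (Fin m) (Fin n) ℝ) : spec A = ‖A‖ := rfl

lemma Matrix.isUnit_of_rank_eq_card {ι K : Type*} [Fintype ι] [DecidableEq ι] [Field K]
    {M : Matrix ι ι K} (h : M.rank = Fintype.card ι) : IsUnit M := by
  rw [← Matrix.mulVec_surjective_iff_isUnit, ← Matrix.coe_mulVecLin, ← LinearMap.range_eq_top]
  apply Submodule.eq_top_of_finrank_eq
  rw [← Matrix.rank, h, Module.finrank_fintype_fun_eq_card]

section pinv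

variable {m n : ℕ} {A : Matrix (Fin m) (Fin n) ℝ}

lemma isUnit_transpose_mul_self_of_rank_eq (hA : A.rank = n) : IsUnit (Aᵀ * A) :=
  Matrix.isUnit_of_rank_eq_card (by rw [Matrix.rank_transpose_mul_self, hA, Fintype.card_fin])

lemma rank_eq_of_isUnit_mul {L : Matrix (Fin n) (Fin m) ℝ} (h : IsUnit (L * A)) : A.rank = n :=
  le_antisymm A.rank_le_width <| by
    simpa [Matrix.rank_of_isUnit _ h] using Matrix.rank_mul_le_right L A

lemma pinv_zero : pinv (0 : Matrix (Fin m) (Fin n) ℝ) = 0 := by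
  simp [pinv]

lemma pinv_mul_self (hA : A.rank = n) : pinv A * A = 1 := by
  rw [pinv, Matrix.mul_assoc,
    Matrix.nonsing_inv_mul _ ((Matrix.isUnit_iff_isUnit_det _).mp
      (isUnit_transpose_mul_self_of_rank_eq hA))]

lemma transpose_mul_pinv (A : Matrix (Fin m) (Fin n) ℝ) : (A * pinv A)ᵀ = A * pinv A := by
  rw [pinv, Matrix.transpose_mul, Matrix.transpose_mul, Matrix.transpose_nonsing_inv,
    Matrix.transpose_mul, Matrix.transpose_transpose, Matrix.mul_assoc]

lemma isStarProjection_mul_pinv (hA : A.rank = n) : IsStarProjection (A * pinv A) where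
  isIdempotentElem := by
    rw [IsIdempotentElem, Matrix.mul_assoc, ← Matrix.mul_assoc (pinv A), pinv_mul_self hA,
      Matrix.one_mul]
  isSelfAdjoint := by
    rw [IsSelfAdjoint, Matrix.star_eq_conjTranspose, Matrix.conjTranspose_eq_transpose_of_trivial,
      transpose_mul_pinv]

lemma one_sub_mul_pinv_mul_self (hA : A.rank = n) : (1 - A * pinv A) * A = 0 := by
  rw [Matrix.sub_mul, Matrix.one_mul, Matrix.mul_assoc, pinv_mul_self hA, Matrix.mul_one, sub_self]

lemma rank_add_eq_of_norm_lt_one {ΔA : Matrix (Fin m) (Fin n) ℝ} (hA : A.rank = n)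
    (hE : ‖pinv A * ΔA‖ < 1) : (A + ΔA).rank = n := by
  refine rank_eq_of_isUnit_mul (L := pinv A) ?_
  have := isUnit_one_sub_of_norm_lt_one ((norm_neg (pinv A * ΔA)).trans_lt hE)
  rwa [sub_neg_eq_add, ← pinv_mul_self hA, ← Matrix.mul_add] at this

lemma one_sub_norm_mul_norm_pinv_add_le {ΔA : Matrix (Fin m) (Fin n) ℝ} (hA : A.rank = n)
    (hB : (A + ΔA).rank = n) :
    (1 - ‖pinv A * ΔA‖) * ‖pinv (A + ΔA)‖ ≤ ‖pinv A‖ := by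
  set B := A + ΔA
  have hdecomp : pinv B = pinv A * (B * pinv B) - pinv A * ΔA * pinv B := by
    rw [← Matrix.mul_assoc, ← Matrix.sub_mul, ← Matrix.mul_sub, add_sub_cancel_right,
      pinv_mul_self hA, Matrix.one_mul]
  have hbound : ‖pinv B‖ ≤ ‖pinv A‖ + ‖pinv A * ΔA‖ * ‖pinv B‖ :=
    calc ‖pinv B‖ = ‖pinv A * (B * pinv B) - pinv A * ΔA * pinv B‖ := congrArg _ hdecomp
      _ ≤ ‖pinv A * (B * pinv B)‖ + ‖pinv A * ΔA * pinv B‖ := norm_sub_le _ _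
      _ ≤ ‖pinv A‖ * ‖B * pinv B‖ + ‖pinv A * ΔA‖ * ‖pinv B‖ := by
          gcongr <;> exact Matrix.l2_opNorm_mul _ _
      _ ≤ ‖pinv A‖ * 1 + ‖pinv A * ΔA‖ * ‖pinv B‖ := by
          gcongr; exact (isStarProjection_mul_pinv hB).norm_le
      _ = ‖pinv A‖ + ‖pinv A * ΔA‖ * ‖pinv B‖ := by rw [mul_one]
  linarith

end pinv

theorem stmt8 {m n : ℕ} (A ΔA : Matrix (Fin m) (Fin n) ℝ)
    (hA : A.rank = n) (hpert : spec ΔA * spec (pinv A) ≤ 1 / 2) :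
    spec ((1 - A * pinv A) * ((A + ΔA) * pinv (A + ΔA))) ≤
      2 * (spec A * spec (pinv A)) * (spec ((1 - A * pinv A) * ΔA) / spec A) := by
  simp only [spec_eq_norm] at hpert ⊢
  have hE : ‖pinv A * ΔA‖ ≤ 1 / 2 := (Matrix.l2_opNorm_mul _ _).trans (by linarith)
  have hB := rank_add_eq_of_norm_lt_one hA (hE.trans_lt one_half_lt_one)
  have hpinvB : ‖pinv (A + ΔA)‖ ≤ 2 * ‖pinv A‖ := by
    nlinarith [one_sub_norm_mul_norm_pinv_add_le hA hB, norm_nonneg (pinv (A + ΔA))]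
  have hrhs : 2 * (‖A‖ * ‖pinv A‖) * (‖(1 - A * pinv A) * ΔA‖ / ‖A‖) =
      ‖(1 - A * pinv A) * ΔA‖ * (2 * ‖pinv A‖) := by
    rcases eq_or_ne A 0 with rfl | hA0
    · -- both sides vanish: `pinv 0 = 0` and `x / 0 = 0`
      simp [pinv_zero]
    · field_simp [norm_ne_zero_iff.mpr hA0]
  rw [hrhs, ← Matrix.mul_assoc, Matrix.mul_add, one_sub_mul_pinv_mul_self hA, zero_add]
  calc ‖(1 - A * pinv A) * ΔA * pinv (A + ΔA)‖
      ≤ ‖(1 - A * pinv A) * ΔA‖ * ‖pinv (A + ΔA)‖ := Matrix.l2_opNorm_mul _ _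
    _ ≤ ‖(1 - A * pinv A) * ΔA‖ * (2 * ‖pinv A‖) := by gcongr
end

section
/- If Q and Q+ΔQ are m×n real matrices with orthonormal columns, with leverage scores ℓ_j = ‖e_jᵀQ‖₂² and ℓ̃_j = ‖e_jᵀ(Q+ΔQ)‖₂², then for each j with ℓ_j > 0, |ℓ̃_j − ℓ_j|/ℓ_j ≤ 2‖e_jᵀΔQ‖₂/√ℓ_j + ‖e_jᵀΔQ‖₂²/ℓ_j. -/
open Matrix

theorem stmt11 {m n : ℕ} (Q ΔQ : Matrix (Fin m) (Fin n) ℝ)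
    (hQ : Qᵀ * Q = 1) (hQt : (Q + ΔQ)ᵀ * (Q + ΔQ) = 1) :
    ∀ j, 0 < lev Q j →
      |lev (Q + ΔQ) j - lev Q j| / lev Q j ≤
        2 * rnorm ΔQ j / Real.sqrt (lev Q j) + rnorm ΔQ j ^ 2 / lev Q j := by
  intro j hl
  set ℓ := lev Q j with hℓ
  set d := rnorm ΔQ j with hd
  have hd0 : 0 ≤ d := Real.sqrt_nonneg _
  have hdsq : d ^ 2 = ∑ k, (ΔQ j k) ^ 2 := by
    rw [hd, rnorm, Real.sq_sqrt]
    positivity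
  have hsqrt : Real.sqrt ℓ ^ 2 = ℓ := Real.sq_sqrt hl.le
  have hsl : 0 < Real.sqrt ℓ := Real.sqrt_pos.mpr hl
  have hdiff : lev (Q + ΔQ) j - ℓ = 2 * (∑ k, Q j k * ΔQ j k) + d ^ 2 := by
    rw [hdsq, hℓ]
    simp only [lev, Matrix.add_apply, add_sq, Finset.sum_add_distrib, Finset.mul_sum]
    ring
  have hcs : |∑ k, Q j k * ΔQ j k| ≤ Real.sqrt ℓ * d := by
    have h := Finset.sum_mul_sq_le_sq_mul_sq Finset.univ (fun k => Q j k) (fun k => ΔQ j k)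
    have h2 : (∑ k, Q j k * ΔQ j k) ^ 2 ≤ ℓ * d ^ 2 := by
      rw [hdsq, hℓ]; simpa [lev] using h
    nlinarith [abs_nonneg (∑ k, Q j k * ΔQ j k), sq_abs (∑ k, Q j k * ΔQ j k),
      mul_nonneg hsl.le hd0, hsqrt]
  have habs : |lev (Q + ΔQ) j - ℓ| ≤ 2 * (Real.sqrt ℓ * d) + d ^ 2 := by
    rw [hdiff]
    calc |2 * (∑ k, Q j k * ΔQ j k) + d ^ 2|
        ≤ |2 * (∑ k, Q j k * ΔQ j k)| + |d ^ 2| := abs_add_le _ _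
      _ ≤ 2 * (Real.sqrt ℓ * d) + d ^ 2 := by
          rw [abs_mul, abs_two, abs_of_nonneg (by positivity : (0:ℝ) ≤ d ^ 2)]
          nlinarith [hcs]
  have key : (2 * (Real.sqrt ℓ * d) + d ^ 2) / ℓ = 2 * d / Real.sqrt ℓ + d ^ 2 / ℓ := by
    rw [add_div]
    congr 1
    rw [div_eq_div_iff hl.ne' hsl.ne']
    nlinarith [hsqrt]
  rw [← key]
  gcongr
end

section
/- Let A = QR be a thin QR decomposition of a real m×n matrix of rank n, and let D be an m×m diagonal matrix with |D_{jj}| ≤ η for all j. Then ‖QᵀDQ‖_F ≤ √n · η, and hence the upper triangular solution Ṙ of Ṙ R⁻¹ + (Ṙ R⁻¹)ᵀ = QᵀDQ + (QᵀDQ)ᵀ satisfies ‖Ṙ R⁻¹‖_F ≤ √2 n η. -/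
open Matrix

lemma contraction {m n : ℕ} (Q : Matrix (Fin m) (Fin n) ℝ) (hQ : Qᵀ * Q = 1)
    (x : Fin m → ℝ) :
    ∑ k, (∑ j, Q j k * x j) ^ 2 ≤ ∑ j, (x j) ^ 2 := by
  set y : Fin n → ℝ := fun k => ∑ j, Q j k * x j with hy
  have hQQ : ∀ k l, (∑ j, Q j k * Q j l) = if k = l then (1:ℝ) else 0 := by
    intro k l
    have := congrFun (congrFun hQ k) l
    simpa [Matrix.mul_apply, Matrix.transpose_apply, Matrix.one_apply] using this
  have hyy : ∑ j, (∑ k, Q j k * y k) ^ 2 = ∑ k, y k ^ 2 := by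
    have h0 : ∀ j : Fin m, (∑ k, Q j k * y k) ^ 2
        = ∑ k, ∑ l, (y k * y l) * (Q j k * Q j l) := by
      intro j
      rw [sq, Finset.sum_mul_sum]
      apply Finset.sum_congr rfl; intro k _
      apply Finset.sum_congr rfl; intro l _
      ring
    rw [Finset.sum_congr rfl (fun j _ => h0 j), Finset.sum_comm]
    have h2 : ∀ k : Fin n, ∑ j, ∑ l, (y k * y l) * (Q j k * Q j l) = y k ^ 2 := by
      intro k
      rw [Finset.sum_comm]
      have h1 : ∀ l : Fin n, ∑ j, (y k * y l) * (Q j k * Q j l)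
          = (y k * y l) * (if k = l then (1:ℝ) else 0) := by
        intro l
        rw [← Finset.mul_sum, hQQ]
      rw [Finset.sum_congr rfl (fun l _ => h1 l)]
      simp [sq]
    rw [Finset.sum_congr rfl (fun k _ => h2 k)]
  have hxy : ∑ j, x j * (∑ k, Q j k * y k) = ∑ k, y k ^ 2 := by
    have h0 : ∀ j : Fin m, x j * (∑ k, Q j k * y k) = ∑ k, y k * (Q j k * x j) := by
      intro j; rw [Finset.mul_sum]; apply Finset.sum_congr rfl
      intro k _; ring
    rw [Finset.sum_congr rfl (fun j _ => h0 j), Finset.sum_comm]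
    apply Finset.sum_congr rfl
    intro k _
    rw [← Finset.mul_sum, sq]
  have hnn : (0:ℝ) ≤ ∑ j, (x j - ∑ k, Q j k * y k) ^ 2 :=
    Finset.sum_nonneg fun j _ => sq_nonneg _
  have hexp : ∑ j, (x j - ∑ k, Q j k * y k) ^ 2
      = ∑ j, (x j)^2 - 2 * ∑ j, x j * (∑ k, Q j k * y k)
        + ∑ j, (∑ k, Q j k * y k) ^ 2 := by
    have h0 : ∀ j : Fin m, (x j - ∑ k, Q j k * y k) ^ 2
        = (x j)^2 - 2 * (x j * (∑ k, Q j k * y k)) + (∑ k, Q j k * y k)^2 := by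
      intro j; ring
    rw [Finset.sum_congr rfl (fun j _ => h0 j), Finset.sum_add_distrib,
      Finset.sum_sub_distrib, ← Finset.mul_sum]
  rw [hxy, hyy] at hexp
  show ∑ k, y k ^ 2 ≤ ∑ j, (x j) ^ 2
  linarith [hexp ▸ hnn]

lemma frob_le_of_sq {m n : ℕ} (A : Matrix (Fin m) (Fin n) ℝ) {c : ℝ} (hc : 0 ≤ c)
    (h : ∑ i, ∑ j, (A i j) ^ 2 ≤ c ^ 2) : frob A ≤ c := by
  have := Real.sqrt_le_sqrt h
  rwa [Real.sqrt_sq hc] at this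

section main
variable {m n : ℕ} (Q : Matrix (Fin m) (Fin n) ℝ) (d : Fin m → ℝ) (η : ℝ)

lemma Sentry (i k : Fin n) :
    (Qᵀ * Matrix.diagonal d * Q) i k = ∑ j, Q j i * ((d j) * Q j k) := by
  rw [Matrix.mul_apply]
  apply Finset.sum_congr rfl
  intro j _
  rw [Matrix.mul_diagonal, Matrix.transpose_apply]
  ring

lemma part1sq (hQ : Qᵀ * Q = 1) (hd : ∀ j, |d j| ≤ η) :
    ∑ i, ∑ k, ((Qᵀ * Matrix.diagonal d * Q) i k) ^ 2 ≤ n * η ^ 2 := by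
  rw [Finset.sum_comm]
  have step1 : ∀ k : Fin n, ∑ i, ((Qᵀ * Matrix.diagonal d * Q) i k) ^ 2
      ≤ ∑ j, ((d j) * Q j k) ^ 2 := by
    intro k
    have := contraction Q hQ (fun j => d j * Q j k)
    simpa [Sentry Q d] using this
  calc ∑ k, ∑ i, ((Qᵀ * Matrix.diagonal d * Q) i k) ^ 2
      ≤ ∑ k, ∑ j, ((d j) * Q j k) ^ 2 := Finset.sum_le_sum fun k _ => step1 k
    _ = ∑ j, (d j)^2 * ∑ k, (Q j k) ^ 2 := by
        rw [Finset.sum_comm]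
        apply Finset.sum_congr rfl
        intro j _
        rw [Finset.mul_sum]
        apply Finset.sum_congr rfl
        intro k _; ring
    _ ≤ ∑ j, η^2 * ∑ k, (Q j k) ^ 2 := by
        apply Finset.sum_le_sum
        intro j _
        apply mul_le_mul_of_nonneg_right _ (Finset.sum_nonneg fun k _ => sq_nonneg _)
        calc (d j)^2 = |d j|^2 := (sq_abs _).symm
          _ ≤ η^2 := by
              have := hd j
              nlinarith [abs_nonneg (d j)]
    _ = η^2 * ∑ j, ∑ k, (Q j k) ^ 2 := by rw [Finset.mul_sum]
    _ = η^2 * n := by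
        rw [Finset.sum_comm]
        have : ∀ k : Fin n, ∑ j, (Q j k) ^ 2 = 1 := by
          intro k
          have := congrFun (congrFun hQ k) k
          simp only [Matrix.mul_apply, Matrix.transpose_apply, Matrix.one_apply_eq] at this
          rw [← this]
          apply Finset.sum_congr rfl
          intro j _; ring
        rw [Finset.sum_congr rfl (fun k _ => this k)]
        simp
    _ = n * η^2 := by ring
end main
lemma part2sq {n : ℕ} (T S : Matrix (Fin n) (Fin n) ℝ)
    (hT : T.BlockTriangular id)
    (heq : ∀ i j, T i j + T j i = S i j + S j i) :
    ∑ i, ∑ j, (T i j) ^ 2 ≤ 2 * ∑ i, ∑ j, (S i j) ^ 2 := by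
  have cross : (0:ℝ) ≤ ∑ i, ∑ j, T i j * T j i := by
    apply Finset.sum_nonneg; intro i _
    apply Finset.sum_nonneg; intro j _
    rcases lt_trichotomy i j with h | h | h
    · rw [hT (show id i < id j from h)]; simp
    · subst h; exact mul_self_nonneg _
    · rw [hT (show id j < id i from h)]; simp
  have expand : ∑ i, ∑ j, (T i j + T j i) ^ 2
      = 2 * ∑ i, ∑ j, (T i j)^2 + 2 * ∑ i, ∑ j, T i j * T j i := by
    have h0 : ∀ i j : Fin n, (T i j + T j i)^2
        = ((T i j)^2 + (T j i)^2) + 2 * (T i j * T j i) := by intro i j; ring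
    calc ∑ i, ∑ j, (T i j + T j i) ^ 2
        = ∑ i, ∑ j, (((T i j)^2 + (T j i)^2) + 2 * (T i j * T j i)) := by
          exact Finset.sum_congr rfl fun i _ => Finset.sum_congr rfl fun j _ => h0 i j
      _ = (∑ i, ∑ j, (T i j)^2 + ∑ i, ∑ j, (T j i)^2) + 2 * ∑ i, ∑ j, T i j * T j i := by
          simp [Finset.sum_add_distrib, Finset.mul_sum]
      _ = _ := by rw [Finset.sum_comm (f := fun i j => (T j i)^2)]; ring
  have bound : ∑ i, ∑ j, (T i j + T j i) ^ 2 ≤ 4 * ∑ i, ∑ j, (S i j) ^ 2 := by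
    have h1 : ∀ i j : Fin n, (T i j + T j i)^2 ≤ 2 * (S i j)^2 + 2 * (S j i)^2 := by
      intro i j
      rw [heq i j]
      nlinarith [sq_nonneg (S i j - S j i)]
    calc ∑ i, ∑ j, (T i j + T j i) ^ 2
        ≤ ∑ i, ∑ j, (2 * (S i j)^2 + 2 * (S j i)^2) :=
          Finset.sum_le_sum fun i _ => Finset.sum_le_sum fun j _ => h1 i j
      _ = 2 * ∑ i, ∑ j, (S i j)^2 + 2 * ∑ i, ∑ j, (S j i)^2 := by
          simp [Finset.sum_add_distrib, Finset.mul_sum]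
      _ = 4 * ∑ i, ∑ j, (S i j)^2 := by
          rw [Finset.sum_comm (f := fun i j => (S j i)^2)]; ring
  linarith

theorem stmt17 {m n : ℕ} (A Q : Matrix (Fin m) (Fin n) ℝ)
    (R Rdot : Matrix (Fin n) (Fin n) ℝ) (d : Fin m → ℝ) (η : ℝ)
    (hrank : A.rank = n)
    (hQR : A = Q * R) (hQ : Qᵀ * Q = 1)
    (hR : R.BlockTriangular id) (hRdet : IsUnit R.det)
    (hd : ∀ j, |d j| ≤ η)
    (hRdot : Rdot.BlockTriangular id)
    (heq : Rdot * R⁻¹ + (Rdot * R⁻¹)ᵀ =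
      Qᵀ * Matrix.diagonal d * Q + (Qᵀ * Matrix.diagonal d * Q)ᵀ) :
    frob (Qᵀ * Matrix.diagonal d * Q) ≤ Real.sqrt n * η ∧
    frob (Rdot * R⁻¹) ≤ Real.sqrt 2 * n * η := by
  rcases Nat.eq_zero_or_pos n with hn | hn
  · subst hn
    constructor <;> · norm_num [frob]
  · -- n ≥ 1, hence m ≥ 1, hence η ≥ 0
    have hm : 0 < m := by
      have h1 : A.rank ≤ m := Matrix.rank_le_height A
      omega
    have hη : 0 ≤ η := le_trans (abs_nonneg _) (hd ⟨0, hm⟩)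
    have hS := part1sq Q d η hQ hd
    have hc1 : (0:ℝ) ≤ Real.sqrt n * η := mul_nonneg (Real.sqrt_nonneg _) hη
    have part1 : frob (Qᵀ * Matrix.diagonal d * Q) ≤ Real.sqrt n * η := by
      apply frob_le_of_sq _ hc1
      calc ∑ i, ∑ j, ((Qᵀ * Matrix.diagonal d * Q) i j) ^ 2 ≤ n * η ^ 2 := hS
        _ = (Real.sqrt n * η)^2 := by
            rw [mul_pow, Real.sq_sqrt (by positivity : (0:ℝ) ≤ (n:ℝ))]
    refine ⟨part1, ?_⟩
    -- triangularity of Rdot * R⁻¹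
    haveI : Invertible R := R.invertibleOfIsUnitDet hRdet
    have hRinv : (R⁻¹).BlockTriangular id :=
      Matrix.blockTriangular_inv_of_blockTriangular hR
    have hT : (Rdot * R⁻¹).BlockTriangular id := hRdot.mul hRinv
    have heq' : ∀ i j, (Rdot * R⁻¹) i j + (Rdot * R⁻¹) j i
        = (Qᵀ * Matrix.diagonal d * Q) i j + (Qᵀ * Matrix.diagonal d * Q) j i := by
      intro i j
      have := congrFun (congrFun heq i) j
      simp only [Matrix.add_apply, Matrix.transpose_apply] at this
      exact this
    have h2 := part2sq (Rdot * R⁻¹) (Qᵀ * Matrix.diagonal d * Q) hT heq'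
    apply frob_le_of_sq _ (by positivity)
    calc ∑ i, ∑ j, ((Rdot * R⁻¹) i j) ^ 2
        ≤ 2 * ∑ i, ∑ j, ((Qᵀ * Matrix.diagonal d * Q) i j) ^ 2 := h2
      _ ≤ 2 * (n * η ^ 2) := by linarith
      _ ≤ (Real.sqrt 2 * n * η)^2 := by
          have hsq : (Real.sqrt 2 * n * η)^2 = 2 * (n^2 * η^2) := by
            rw [mul_pow, mul_pow, Real.sq_sqrt (by norm_num : (0:ℝ) ≤ 2)]
            ring
          rw [hsq]
          have hn2 : (n:ℝ) ≤ (n:ℝ)^2 := by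
            have : (1:ℝ) ≤ (n:ℝ) := by exact_mod_cast hn
            nlinarith
          nlinarith [sq_nonneg η]
end
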